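/- In the bounded-degree setting with a critical hospital, if there exists a stable matching in G, then for every element X ∈ V⁺ there exists an element Y ∈ V⁻ such that there is a directed path from X to Y in the directed graph 𝐃 = (V, A). -/

import Mathlib

open Classical

variable {D H : Type}

def edgesD (E : Set (D × H)) (d : D) : Set (D × H) := {e ∈ E | e.1 = d}

def edgesH (E : Set (D × H)) (h : H) : Set (D × H) := {e ∈ E | e.2 = h}

def optD (E : Set (D × H)) (d : D) : Set (Option (D × H)) :=
  insert none (some '' edgesD E d)

def optH (E : Set (D × H)) (h : H) : Set (Option (D × H)) :=
  insert none (some '' edgesH E h)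

/-- An instance of the strongly stable matching problem with closures:
a bipartite graph between doctors `D` and hospitals `H` with edge set `E`,
a set `S` of closable hospitals, and for each vertex a transitive, total
preference relation on its incident edges together with `∅` (modelled by
`Option`, where `none` plays the role of `∅`), such that every incident
edge is strictly preferred to `∅`. -/
structure SSMC (D H : Type) where
  E : Set (D × H)
  S : Set H
  prefD : D → Option (D × H) → Option (D × H) → Prop
  prefH : H → Option (D × H) → Option (D × H) → Prop
  prefD_trans : ∀ d, ∀ e ∈ optD E d, ∀ f ∈ optD E d, ∀ g ∈ optD E d,
    prefD d e f → prefD d f g → prefD d e g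
  prefD_total : ∀ d, ∀ e ∈ optD E d, ∀ f ∈ optD E d, prefD d e f ∨ prefD d f e
  prefD_none : ∀ d, ∀ e ∈ edgesD E d, prefD d (some e) none ∧ ¬ prefD d none (some e)
  prefH_trans : ∀ h, ∀ e ∈ optH E h, ∀ f ∈ optH E h, ∀ g ∈ optH E h,
    prefH h e f → prefH h f g → prefH h e g
  prefH_total : ∀ h, ∀ e ∈ optH E h, ∀ f ∈ optH E h, prefH h e f ∨ prefH h f e
  prefH_none : ∀ h, ∀ e ∈ edgesH E h, prefH h (some e) none ∧ ¬ prefH h none (some e)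

namespace SSMC

variable (I : SSMC D H)

/-- `e ≻_d f` -/
def strictD (d : D) (e f : Option (D × H)) : Prop := I.prefD d e f ∧ ¬ I.prefD d f e

/-- `e ∼_d f` -/
def simD (d : D) (e f : Option (D × H)) : Prop := I.prefD d e f ∧ I.prefD d f e

/-- `e ≻_h f` -/
def strictH (h : H) (e f : Option (D × H)) : Prop := I.prefH h e f ∧ ¬ I.prefH h f e

/-- `e ∼_h f` -/
def simH (h : H) (e f : Option (D × H)) : Prop := I.prefH h e f ∧ I.prefH h f e

/-- A matching: a subset of `E` with at most one edge at each vertex. -/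
def isMatching (μ : Set (D × H)) : Prop :=
  μ ⊆ I.E ∧ (∀ e ∈ μ, ∀ f ∈ μ, e.1 = f.1 → e = f) ∧
    (∀ e ∈ μ, ∀ f ∈ μ, e.2 = f.2 → e = f)

end SSMC

/-- `μ(d)`: the edge of `μ` at doctor `d` (or `none`). -/
noncomputable def muD (μ : Set (D × H)) (d : D) : Option (D × H) :=
  if h : ∃ e, e ∈ μ ∧ e.1 = d then some h.choose else none

/-- `μ(h)`: the edge of `μ` at hospital `h` (or `none`). -/
noncomputable def muH (μ : Set (D × H)) (h : H) : Option (D × H) :=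
  if hh : ∃ e, e ∈ μ ∧ e.2 = h then some hh.choose else none

namespace SSMC

variable (I : SSMC D H)

/-- `e` blocks the matching `μ`: `e ∈ E \ μ`, `e` weakly blocks `μ` on both of its
endpoints and strongly blocks `μ` on at least one of them (where blocking on a
hospital `h ∈ S` additionally requires `μ(h) ≠ ∅`). -/
def blocks (μ : Set (D × H)) (e : D × H) : Prop :=
  e ∈ I.E ∧ e ∉ μ ∧
  I.prefD e.1 (some e) (muD μ e.1) ∧
  (I.prefH e.2 (some e) (muH μ e.2) ∧ (e.2 ∈ I.S → muH μ e.2 ≠ none)) ∧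
  (I.strictD e.1 (some e) (muD μ e.1) ∨
    (I.strictH e.2 (some e) (muH μ e.2) ∧ (e.2 ∈ I.S → muH μ e.2 ≠ none)))

/-- A stable matching: no edge blocks it. -/
def stable (μ : Set (D × H)) : Prop :=
  I.isMatching μ ∧ ∀ e, ¬ I.blocks μ e

/-- `Ch_D(F)`: union over doctors `d` of the most preferred edges of `F(d)`. -/
def ChD (F : Set (D × H)) : Set (D × H) :=
  {e ∈ F | ∀ f ∈ F, f.1 = e.1 → I.prefD e.1 (some e) (some f)}

/-- `Ch_H(F)`: union over hospitals `h` of the most preferred edges of `F(h)`. -/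
def ChH (F : Set (D × H)) : Set (D × H) :=
  {e ∈ F | ∀ f ∈ F, f.2 = e.2 → I.prefH e.2 (some e) (some f)}

/-- `Ch(F) = Ch_H(Ch_D(F))`. -/
def Ch (F : Set (D × H)) : Set (D × H) := I.ChH (I.ChD F)

/-- `e ≻_d F` for a flat set `F`. -/
def dSucc (F : Set (D × H)) (e : D × H) : Prop :=
  (∀ f ∈ F, f.1 ≠ e.1) ∨ ∃ f ∈ F, f.1 = e.1 ∧ I.strictD e.1 (some e) (some f)

/-- `e ∼_d F` for a flat set `F`. -/
def dSim (F : Set (D × H)) (e : D × H) : Prop :=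
  ∃ f ∈ F, f.1 = e.1 ∧ I.simD e.1 (some e) (some f)

/-- `block(F)` for a flat set `F ⊆ E`. -/
def setBlock (F : Set (D × H)) : Set (D × H) :=
  {e | e ∈ I.E ∧ e ∉ F ∧ (∃ f ∈ F, f.2 = e.2) ∧
    (I.dSucc F e ∨ I.dSim F e) ∧
    (I.dSucc F e → ∃ f ∈ F, f.2 = e.2 ∧ I.prefH e.2 (some e) (some f)) ∧
    (I.dSim F e → ∃ f ∈ F, f.2 = e.2 ∧ I.strictH e.2 (some e) (some f))}

/-- `L = Ch(E \ R)`. -/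
def Lset (R : Set (D × H)) : Set (D × H) := I.Ch (I.E \ R)

/-- The pre-processing conditions (R1)–(R5) on a pair `(R, μ)`. -/
def preproc (R μ : Set (D × H)) : Prop :=
  R ⊆ I.E ∧ I.isMatching μ ∧
  -- (R1)
  (∀ σ, I.stable σ → ∀ e ∈ R, e ∉ σ) ∧
  -- (R2)
  μ ⊆ I.Ch (I.E \ R) ∧
  -- (R3)
  (∀ d : D, (∃ e ∈ I.E \ R, e.1 = d) → ∃ e ∈ μ, e.1 = d) ∧
  -- (R4)
  R ∩ I.setBlock (I.Ch (I.E \ R)) = ∅ ∧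
  -- (R5)
  (∀ d : D, ∀ e ∈ R, e.1 = d → ∀ f ∈ I.E \ R, f.1 = d → I.prefD d (some e) (some f))

/-- `h` is a critical hospital with respect to `(R, μ)`. -/
def critical (R μ : Set (D × H)) (h : H) : Prop :=
  h ∉ I.S ∧ (∀ e ∈ μ, e.2 ≠ h) ∧
  ((∃ e ∈ I.Ch (I.E \ R), e.2 = h) ∨ (∃ e ∈ R, e.2 = h))

/-- Assumption (★): every doctor strictly prefers any acceptable hospital
outside `S` to any acceptable hospital in `S`. -/
def starAssumption : Prop :=
  ∀ (d : D) (h h' : H), (d, h) ∈ I.E → (d, h') ∈ I.E → h ∈ I.S → h' ∉ I.S →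
    I.strictD d (some (d, h')) (some (d, h))

end SSMC

/-- Adjacency relation on `D ⊕ H` induced by an edge set `L`. -/
def adjRel (L : Set (D × H)) : (D ⊕ H) → (D ⊕ H) → Prop
  | Sum.inl d, Sum.inr h => (d, h) ∈ L
  | Sum.inr h, Sum.inl d => (d, h) ∈ L
  | _, _ => False

/-- `X` is a connected component of the bipartite graph `(D, H; L)`. -/
def isComponent (L : Set (D × H)) (X : Set (D ⊕ H)) : Prop :=
  ∃ v ∈ X, X = {w | Relation.ReflTransGen (adjRel L) v w}

/-- `D_X`: the doctors in `X`. -/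
def Dside (X : Set (D ⊕ H)) : Set D := {d | Sum.inl d ∈ X}

/-- `H_X`: the hospitals in `X`. -/
def Hside (X : Set (D ⊕ H)) : Set H := {h | Sum.inr h ∈ X}

namespace SSMC

variable (I : SSMC D H)

/-- `Leaf_L(D_X)`: the doctors of `X` incident to exactly one edge of `L = Ch(E \ R)`. -/
def leafSet (R : Set (D × H)) (X : Set (D ⊕ H)) : Set D :=
  {d ∈ Dside X | (edgesD (I.Lset R) d).ncard = 1}

/-- `X ∈ 𝓒`: connected component of `G* = (D, H; Ch(E \ R))` with at least two vertices. -/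
def memC (R : Set (D × H)) (X : Set (D ⊕ H)) : Prop :=
  isComponent (I.Lset R) X ∧ 2 ≤ X.ncard

/-- `X ∈ 𝓟`. -/
def memP (R : Set (D × H)) (X : Set (D ⊕ H)) : Prop :=
  I.memC R X ∧ (Dside X).ncard = (Hside X).ncard

/-- `X ∈ 𝓠`. -/
def memQ (R : Set (D × H)) (X : Set (D ⊕ H)) : Prop :=
  I.memC R X ∧ (Dside X).ncard < (Hside X).ncard

/-- `X ∈ 𝓟*`. -/
def memPstar (R : Set (D × H)) (X : Set (D ⊕ H)) : Prop :=
  I.memP R X ∧ (I.leafSet R X).ncard = 1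

/-- `X ∈ 𝓡`: a component consisting of a single hospital `h ∈ H \ S` with `R(h) ≠ ∅`. -/
def memRcal (R : Set (D × H)) (X : Set (D ⊕ H)) : Prop :=
  isComponent (I.Lset R) X ∧
    ∃ h : H, X = {Sum.inr h} ∧ h ∉ I.S ∧ ∃ e ∈ R, e.2 = h

end SSMC

namespace SSMC

variable (I : SSMC D H)

/-- The vertex set `𝓥 = 𝓟* ∪ 𝓠 ∪ 𝓡` of the directed graph `𝐃`. -/
def memV (R : Set (D × H)) (X : Set (D ⊕ H)) : Prop :=
  I.memPstar R X ∨ I.memQ R X ∨ I.memRcal R X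

/-- The arc relation of the directed graph `𝐃 = (𝓥, A)`: there is an arc from `X`
to `Y` iff `X, Y ∈ 𝓥` are distinct and conditions (P1)–(P4) hold, phrased via the
(unique) leaf doctor `d_Y` of `Y`, the hospital `h_Y` with `(d_Y, h_Y) ∈ L`, and
the other hospital `h̄_Y` acceptable to `d_Y`. -/
def arc (R μ : Set (D × H)) (X Y : Set (D ⊕ H)) : Prop :=
  I.memV R X ∧ I.memV R Y ∧ X ≠ Y ∧ I.memPstar R Y ∧
  ∃ (dY : D) (hY hbY : H),
    dY ∈ I.leafSet R Y ∧ (dY, hY) ∈ I.Lset R ∧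
    hbY ≠ hY ∧ (dY, hbY) ∈ I.E ∧
    -- (P1)
    (edgesD I.E dY).ncard = 2 ∧
    Sum.inr hbY ∈ X ∧
    I.strictD dY (some (dY, hY)) (some (dY, hbY)) ∧
    -- (P2)
    (I.memPstar R X →
      ∃ (dX : D) (hX : H), dX ∈ I.leafSet R X ∧ (dX, hX) ∈ I.Lset R ∧ hX = hbY ∧
        I.strictH hbY (some (dY, hbY)) (some (dX, hbY))) ∧
    -- (P3)
    (I.memQ R X →
      ∃ e ∈ I.Lset R, e.2 = hbY ∧ I.prefH hbY (some (dY, hbY)) (some e)) ∧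
    -- (P4)
    (I.memRcal R X →
      ∀ e ∈ R, e.2 = hbY →
        (I.simD e.1 (some e) (muD μ e.1) → I.prefH hbY (some (dY, hbY)) (some e)) ∧
        (I.strictD e.1 (some e) (muD μ e.1) → I.strictH hbY (some (dY, hbY)) (some e)))

/-- `X ∈ 𝓥⁺`. -/
def memVplus (R : Set (D × H)) (X : Set (D ⊕ H)) : Prop :=
  (I.memQ R X ∧ ∀ h ∈ Hside X, h ∉ I.S) ∨ I.memRcal R X

/-- `X ∈ 𝓥⁻`. -/
def memVminus (R : Set (D × H)) (X : Set (D ⊕ H)) : Prop :=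
  I.memPstar R X ∧ ∃ dX ∈ I.leafSet R X, ∃ hX : H, (dX, hX) ∈ I.Lset R ∧ hX ∈ I.S

end SSMC

/-!
Fix a stable matching `σ`. If a doctor `d` is matched by `σ` along an edge `w ∉ L`, then `d`
strictly prefers its `μ`-edge `m ∈ L` to `w`: otherwise `w` would be a first choice of `d`, and a
first choice that the hospital of `w` prefers to `w` would block `σ`. Hence `E(d) = {m, w}` and
`d` is a leaf of its component `Y` of `G*`. Being connected, `Y` has at least
`|D_Y| + |H_Y| - 1` edges; it has exactly `2 |D_Y| - |Leaf_L(D_Y)|` of them, and `μ` injects `D_Y`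
into `H_Y`. So `Y ∈ 𝓟*`, `d = d_Y` and `w = (d_Y, h̄_Y)`.

Every `X ∈ 𝓥⁺` has a hospital matched by `σ` along such an edge (for `X ∈ 𝓠` by counting, for
`X ∈ 𝓡` because an edge of `R` at its hospital does not block `σ`), which gives an arc from `X`.
From such a `Y`, the edge `(d_Y, h_Y)` does not block `σ`: either `h_Y ∈ S` is unmatched and
`Y ∈ 𝓥⁻`, or `h_Y` is matched by `σ` to an edge it prefers to `(d_Y, h_Y)`, hence outside `L`,
which gives the next arc. A component reached in this way determines its predecessor (the
component of `h̄_Y`), and `X ∉ 𝓟*` is never reached, so by finiteness the walk must hit `𝓥⁻`.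
-/

theorem Set.mem_of_forall_mem_insert_exists_rel {α : Type*} [Finite α] {r : α → α → Prop}
    {s : Set α} {x : α}
    (hr : ∀ y ∈ s, ∀ a ∈ insert x s, ∀ b ∈ insert x s, r y a → r y b → a = b)
    (h : ∀ a ∈ insert x s, ∃ y ∈ s, r y a) : x ∈ s := by
  by_contra hx
  choose! f hfs hfr using h
  have hinj : Set.InjOn f (insert x s) := fun a ha b hb hab =>
    hr _ (hfs a ha) a ha b hb (hfr a ha) (hab ▸ hfr b hb)
  have := Set.ncard_le_ncard_of_injOn f hfs hinj
  rw [Set.ncard_insert_of_notMem hx] at this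
  omega

theorem Set.ncard_preimage_inl_add_ncard_preimage_inr {α β : Type*} {s : Set (α ⊕ β)}
    (hs : s.Finite) : (Sum.inl ⁻¹' s).ncard + (Sum.inr ⁻¹' s).ncard = s.ncard := by
  have hl := hs.preimage Sum.inl_injective.injOn
  have hr := hs.preimage Sum.inr_injective.injOn
  conv_rhs => rw [← Set.image_preimage_inl_union_image_preimage_inr s]
  rw [Set.ncard_union_eq Set.disjoint_image_inl_image_inr (hl.image _) (hr.image _),
    Set.ncard_image_of_injective _ Sum.inl_injective,
    Set.ncard_image_of_injective _ Sum.inr_injective]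

lemma mem_of_muD_eq_some {μ : Set (D × H)} {d : D} {e : D × H} (h : muD μ d = some e) :
    e ∈ μ ∧ e.1 = d := by
  unfold muD at h
  split_ifs at h with hex
  exact Option.some_injective _ h ▸ hex.choose_spec

lemma mem_of_muH_eq_some {μ : Set (D × H)} {h : H} {e : D × H} (he : muH μ h = some e) :
    e ∈ μ ∧ e.2 = h := by
  unfold muH at he
  split_ifs at he with hex
  exact Option.some_injective _ he ▸ hex.choose_spec

namespace SSMC

variable {I : SSMC D H} {R μ σ : Set (D × H)}

lemma some_mem_optD {e : D × H} (he : e ∈ I.E) : some e ∈ optD I.E e.1 :=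
  Or.inr ⟨e, ⟨he, rfl⟩, rfl⟩

lemma some_mem_optH {e : D × H} (he : e ∈ I.E) : some e ∈ optH I.E e.2 :=
  Or.inr ⟨e, ⟨he, rfl⟩, rfl⟩

lemma prefD_refl {d : D} {e : Option (D × H)} (he : e ∈ optD I.E d) : I.prefD d e e :=
  (I.prefD_total d e he e he).elim id id

lemma prefH_refl {h : H} {e : Option (D × H)} (he : e ∈ optH I.E h) : I.prefH h e e :=
  (I.prefH_total h e he e he).elim id id

lemma strictD_of_strictD_of_prefD {d : D} {a b c : Option (D × H)} (ha : a ∈ optD I.E d)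
    (hb : b ∈ optD I.E d) (hc : c ∈ optD I.E d) (hab : I.strictD d a b) (hbc : I.prefD d b c) :
    I.strictD d a c :=
  ⟨I.prefD_trans d a ha b hb c hc hab.1 hbc,
    fun hca => hab.2 (I.prefD_trans d b hb c hc a ha hbc hca)⟩

lemma isMatching.eq_of_fst_eq (hμ : I.isMatching μ) {e f : D × H} (he : e ∈ μ) (hf : f ∈ μ)
    (h : e.1 = f.1) : e = f :=
  hμ.2.1 e he f hf h

lemma isMatching.eq_of_snd_eq (hμ : I.isMatching μ) {e f : D × H} (he : e ∈ μ) (hf : f ∈ μ)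
    (h : e.2 = f.2) : e = f :=
  hμ.2.2 e he f hf h

lemma isMatching.muD_eq (hμ : I.isMatching μ) {e : D × H} (he : e ∈ μ) :
    muD μ e.1 = some e := by
  have hex : ∃ f, f ∈ μ ∧ f.1 = e.1 := ⟨e, he, rfl⟩
  rw [muD, dif_pos hex]
  exact congrArg some (hμ.eq_of_fst_eq hex.choose_spec.1 he hex.choose_spec.2)

lemma isMatching.muH_eq (hμ : I.isMatching μ) {e : D × H} (he : e ∈ μ) :
    muH μ e.2 = some e := by
  have hex : ∃ f, f ∈ μ ∧ f.2 = e.2 := ⟨e, he, rfl⟩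
  rw [muH, dif_pos hex]
  exact congrArg some (hμ.eq_of_snd_eq hex.choose_spec.1 he hex.choose_spec.2)

lemma muD_mem_optD (hμ : μ ⊆ I.E) (d : D) : muD μ d ∈ optD I.E d := by
  cases h : muD μ d with
  | none => exact Set.mem_insert _ _
  | some e =>
    obtain ⟨he, rfl⟩ := mem_of_muD_eq_some h
    exact some_mem_optD (hμ he)

lemma stable.isMatching (hσ : I.stable σ) : I.isMatching σ := hσ.1

lemma stable.subset (hσ : I.stable σ) : σ ⊆ I.E := hσ.1.1

lemma stable.exists_prefH (hσ : I.stable σ) {e : D × H} (he : e ∈ I.E) (heσ : e ∉ σ)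
    (hd : I.prefD e.1 (some e) (muD σ e.1)) (hS : e.2 ∈ I.S → muH σ e.2 ≠ none) :
    ∃ w ∈ σ, w.2 = e.2 ∧ I.prefH e.2 (some w) (some e) := by
  have hnot : ¬ I.strictH e.2 (some e) (muH σ e.2) := fun hstr =>
    hσ.2 e ⟨he, heσ, hd, ⟨hstr.1, hS⟩, Or.inr ⟨hstr, hS⟩⟩
  cases hw : muH σ e.2 with
  | none => exact absurd (hw ▸ I.prefH_none e.2 e ⟨he, rfl⟩) hnot
  | some w =>
    obtain ⟨hwσ, hw2⟩ := mem_of_muH_eq_some hw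
    refine ⟨w, hwσ, hw2, by_contra fun hwe => hnot (hw ▸ ⟨?_, hwe⟩)⟩
    have hwopt : some w ∈ optH I.E e.2 := hw2 ▸ some_mem_optH (hσ.subset hwσ)
    exact (I.prefH_total _ _ (some_mem_optH he) _ hwopt).resolve_right hwe

lemma stable.exists_strictH (hσ : I.stable σ) {e : D × H} (he : e ∈ I.E) (heσ : e ∉ σ)
    (hd : I.strictD e.1 (some e) (muD σ e.1)) (hS : e.2 ∈ I.S → muH σ e.2 ≠ none) :
    ∃ w ∈ σ, w.2 = e.2 ∧ I.strictH e.2 (some w) (some e) := by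
  have hnot : ¬ I.prefH e.2 (some e) (muH σ e.2) := fun hpref =>
    hσ.2 e ⟨he, heσ, hd.1, ⟨hpref, hS⟩, Or.inl hd⟩
  cases hw : muH σ e.2 with
  | none => exact absurd (hw ▸ (I.prefH_none e.2 e ⟨he, rfl⟩).1) hnot
  | some w =>
    obtain ⟨hwσ, hw2⟩ := mem_of_muH_eq_some hw
    rw [hw] at hnot
    have hwopt : some w ∈ optH I.E e.2 := hw2 ▸ some_mem_optH (hσ.subset hwσ)
    exact ⟨w, hwσ, hw2, (I.prefH_total _ _ hwopt _ (some_mem_optH he)).resolve_right hnot, hnot⟩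

lemma prefD_muD_of_mem_ChD {F : Set (D × H)} (hF : F ⊆ I.E) (hσ : σ ⊆ F) {e : D × H}
    (he : e ∈ I.ChD F) : I.prefD e.1 (some e) (muD σ e.1) := by
  cases hw : muD σ e.1 with
  | none => exact (I.prefD_none e.1 e ⟨hF he.1, rfl⟩).1
  | some w =>
    obtain ⟨hwσ, hw1⟩ := mem_of_muD_eq_some hw
    exact he.2 w (hσ hwσ) hw1

lemma Lset_subset_ChD : I.Lset R ⊆ I.ChD (I.E \ R) := fun _ he => he.1

lemma Lset_subset : I.Lset R ⊆ I.E \ R := fun _ he => he.1.1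

lemma prefH_of_mem_Lset {e f : D × H} (he : e ∈ I.Lset R) (hf : f ∈ I.Lset R)
    (h : f.2 = e.2) : I.prefH e.2 (some e) (some f) :=
  he.2 f hf.1 h

lemma preproc.subset (hpre : I.preproc R μ) : R ⊆ I.E := hpre.1

lemma preproc.isMatching (hpre : I.preproc R μ) : I.isMatching μ := hpre.2.1

lemma preproc.notMem_stable (hpre : I.preproc R μ) (hσ : I.stable σ) {e : D × H} (he : e ∈ R) :
    e ∉ σ :=
  hpre.2.2.1 σ hσ e he

lemma preproc.mem_Lset (hpre : I.preproc R μ) {m : D × H} (hm : m ∈ μ) : m ∈ I.Lset R :=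
  hpre.2.2.2.1 hm

lemma preproc.exists_mem_fst_eq (hpre : I.preproc R μ) {e : D × H} (he : e ∈ I.E \ R) :
    ∃ m ∈ μ, m.1 = e.1 :=
  hpre.2.2.2.2.1 e.1 ⟨e, he, rfl⟩

lemma preproc.stable_subset (hpre : I.preproc R μ) (hσ : I.stable σ) : σ ⊆ I.E \ R :=
  fun _ he => ⟨hσ.subset he, fun hR => hpre.notMem_stable hσ hR he⟩

lemma preproc.prefD_muD_of_mem (hpre : I.preproc R μ) (hσ : I.stable σ) {e : D × H}
    (he : e ∈ R) : I.prefD e.1 (some e) (muD σ e.1) := by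
  cases hw : muD σ e.1 with
  | none => exact (I.prefD_none e.1 e ⟨hpre.subset he, rfl⟩).1
  | some w =>
    obtain ⟨hwσ, hw1⟩ := mem_of_muD_eq_some hw
    exact hpre.2.2.2.2.2.2 e.1 e he rfl w (hpre.stable_subset hσ hwσ) hw1

lemma preproc.prefD_muD_muD (hpre : I.preproc R μ) (hσ : I.stable σ) (d : D) :
    I.prefD d (muD μ d) (muD σ d) := by
  cases hm : muD μ d with
  | some m =>
    obtain ⟨hmμ, rfl⟩ := mem_of_muD_eq_some hm
    exact prefD_muD_of_mem_ChD Set.sdiff_subset (hpre.stable_subset hσ)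
      (Lset_subset_ChD (hpre.mem_Lset hmμ))
  | none =>
    cases hs : muD σ d with
    | none => exact prefD_refl (Set.mem_insert _ _)
    | some s =>
      obtain ⟨hsσ, rfl⟩ := mem_of_muD_eq_some hs
      obtain ⟨m, hmμ, hm1⟩ := hpre.exists_mem_fst_eq (hpre.stable_subset hσ hsσ)
      rw [← hm1, hpre.isMatching.muD_eq hmμ] at hm
      cases hm

lemma preproc.exists_prefH_of_mem (hpre : I.preproc R μ) (hσ : I.stable σ) {e : D × H}
    (he : e ∈ R) (hS : e.2 ∉ I.S) :
    ∃ w ∈ σ, w.2 = e.2 ∧ I.prefH e.2 (some w) (some e) ∧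
      (I.strictD e.1 (some e) (muD μ e.1) → I.strictH e.2 (some w) (some e)) := by
  have heσ := hpre.notMem_stable hσ he
  obtain ⟨w, hwσ, hw2, hwe⟩ :=
    hσ.exists_prefH (hpre.subset he) heσ (hpre.prefD_muD_of_mem hσ he) (absurd · hS)
  refine ⟨w, hwσ, hw2, hwe, fun hstr => ?_⟩
  have hstrσ : I.strictD e.1 (some e) (muD σ e.1) :=
    strictD_of_strictD_of_prefD (some_mem_optD (hpre.subset he))
      (muD_mem_optD hpre.isMatching.1 _) (muD_mem_optD hσ.subset _) hstr
      (hpre.prefD_muD_muD hσ _)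
  obtain ⟨w', hw'σ, hw'2, hw'e⟩ := hσ.exists_strictH (hpre.subset he) heσ hstrσ (absurd · hS)
  rwa [hσ.isMatching.eq_of_snd_eq hwσ hw'σ (hw2.trans hw'2.symm)]

lemma preproc.exists_prefH_of_mem_Lset (hpre : I.preproc R μ) (hσ : I.stable σ) {e : D × H}
    (he : e ∈ I.Lset R) (hS : e.2 ∉ I.S) :
    ∃ w ∈ σ, w.2 = e.2 ∧ I.prefH e.2 (some w) (some e) := by
  by_cases heσ : e ∈ σ
  · exact ⟨e, heσ, rfl, prefH_refl (some_mem_optH (Lset_subset he).1)⟩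
  · exact hσ.exists_prefH (Lset_subset he).1 heσ
      (prefD_muD_of_mem_ChD Set.sdiff_subset (hpre.stable_subset hσ) (Lset_subset_ChD he))
      (absurd · hS)

lemma preproc.notMem_ChD_of_mem_stable (hpre : I.preproc R μ) (hσ : I.stable σ) {w : D × H}
    (hw : w ∈ σ) (hwL : w ∉ I.Lset R) : w ∉ I.ChD (I.E \ R) := by
  intro hwC
  obtain ⟨f, hfC, hf2, hwf⟩ : ∃ f ∈ I.ChD (I.E \ R), f.2 = w.2 ∧
      ¬ I.prefH w.2 (some w) (some f) := by
    by_contra! h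
    exact hwL ⟨hwC, h⟩
  have hfσ : f ∉ σ := fun hfσ =>
    hwf (hσ.isMatching.eq_of_snd_eq hw hfσ hf2.symm ▸ prefH_refl (some_mem_optH (hσ.subset hw)))
  obtain ⟨w', hw'σ, hw'2, hw'f⟩ := hσ.exists_prefH hfC.1.1 hfσ
    (prefD_muD_of_mem_ChD Set.sdiff_subset (hpre.stable_subset hσ) hfC)
    (fun _ => by rw [hf2, hσ.isMatching.muH_eq hw]; exact Option.some_ne_none _)
  rw [hσ.isMatching.eq_of_snd_eq hw'σ hw (hw'2.trans hf2), hf2] at hw'f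
  exact hwf hw'f

lemma preproc.strictD_of_mem_stable (hpre : I.preproc R μ) (hσ : I.stable σ) {m w : D × H}
    (hm : m ∈ I.ChD (I.E \ R)) (hw : w ∈ σ) (hwL : w ∉ I.Lset R) (h1 : w.1 = m.1) :
    I.strictD w.1 (some m) (some w) := by
  have hwR := hpre.stable_subset hσ hw
  rw [h1]
  refine ⟨hm.2 w hwR h1, fun hwm => hpre.notMem_ChD_of_mem_stable hσ hw hwL ⟨hwR, ?_⟩⟩
  intro f hf hf1
  rw [h1] at hf1 ⊢
  exact I.prefD_trans _ _ (h1 ▸ some_mem_optD hwR.1) _ (some_mem_optD hm.1.1) _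
    (hf1 ▸ some_mem_optD hf.1) hwm (hm.2 f hf hf1)

end SSMC

section Components

variable {L : Set (D × H)} {X : Set (D ⊕ H)}

def bipartiteGraph (L : Set (D × H)) : SimpleGraph (D ⊕ H) where
  Adj := adjRel L
  symm := ⟨by rintro (d | h) (d' | h') hadj <;> exact hadj⟩
  loopless := ⟨by rintro (d | h) hadj <;> exact hadj⟩

def compOf (L : Set (D × H)) (v : D ⊕ H) : Set (D ⊕ H) :=
  {w | Relation.ReflTransGen (adjRel L) v w}

lemma compOf_eq_supp (v : D ⊕ H) :
    compOf L v = ((bipartiteGraph L).connectedComponentMk v).supp := by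
  ext w
  rw [SimpleGraph.ConnectedComponent.mem_supp_iff, SimpleGraph.ConnectedComponent.eq,
    SimpleGraph.reachable_comm, SimpleGraph.reachable_iff_reflTransGen]
  rfl

lemma isComponent_compOf (v : D ⊕ H) : isComponent L (compOf L v) :=
  ⟨v, Relation.ReflTransGen.refl, rfl⟩

lemma mem_compOf_self (v : D ⊕ H) : v ∈ compOf L v := Relation.ReflTransGen.refl

lemma isComponent.eq_compOf (hX : isComponent L X) {v : D ⊕ H} (hv : v ∈ X) :
    X = compOf L v := by
  obtain ⟨u, -, rfl⟩ := hX
  change v ∈ compOf L u at hv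
  change compOf L u = compOf L v
  rw [compOf_eq_supp, SimpleGraph.ConnectedComponent.mem_supp_iff] at hv
  rw [compOf_eq_supp, compOf_eq_supp, hv]

lemma isComponent.eq_of_mem {Y : Set (D ⊕ H)} (hX : isComponent L X) (hY : isComponent L Y)
    {v : D ⊕ H} (hvX : v ∈ X) (hvY : v ∈ Y) : X = Y :=
  (hX.eq_compOf hvX).trans (hY.eq_compOf hvY).symm

lemma isComponent.mem_of_adj (hX : isComponent L X) {v w : D ⊕ H} (hv : v ∈ X)
    (hadj : adjRel L v w) : w ∈ X := by
  rw [hX.eq_compOf hv]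
  exact Relation.ReflTransGen.single hadj

lemma isComponent.inr_mem (hX : isComponent L X) {e : D × H} (he : e ∈ L)
    (hd : Sum.inl e.1 ∈ X) : Sum.inr e.2 ∈ X :=
  hX.mem_of_adj hd he

lemma isComponent.inl_mem (hX : isComponent L X) {e : D × H} (he : e ∈ L)
    (hh : Sum.inr e.2 ∈ X) : Sum.inl e.1 ∈ X :=
  hX.mem_of_adj hh he

lemma isComponent.exists_adj (hX : isComponent L X) (h2 : 2 ≤ X.ncard) {v : D ⊕ H}
    (hv : v ∈ X) : ∃ w ∈ X, adjRel L v w := by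
  obtain ⟨u, hu, hne⟩ := Set.exists_ne_of_one_lt_ncard h2 v
  rw [hX.eq_compOf hv] at hu ⊢
  obtain rfl | ⟨w, hadj, -⟩ := Relation.ReflTransGen.cases_head hu
  · exact absurd rfl hne
  · exact ⟨w, Relation.ReflTransGen.single hadj, hadj⟩

lemma isComponent.exists_mem_fst_eq (hX : isComponent L X) (h2 : 2 ≤ X.ncard) {d : D}
    (hd : d ∈ Dside X) : ∃ e ∈ L, e.1 = d := by
  obtain ⟨_ | h, -, hadj⟩ := hX.exists_adj h2 hd
  · exact hadj.elim
  · exact ⟨(d, h), hadj, rfl⟩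

lemma two_le_ncard_compOf [Finite D] [Finite H] {e : D × H} (he : e ∈ L) :
    2 ≤ (compOf L (Sum.inl e.1)).ncard := by
  rw [← Set.ncard_pair (Sum.inl_ne_inr (a := e.1) (b := e.2))]
  refine Set.ncard_le_ncard ?_
  rintro v (rfl | rfl)
  · exact mem_compOf_self _
  · exact (isComponent_compOf _).inr_mem he (mem_compOf_self _)

lemma isComponent.ncard_Dside_le_ncard_Hside [Finite H] (hX : isComponent L X)
    {M : Set (D × H)} (hML : M ⊆ L) (hM : ∀ e ∈ M, ∀ f ∈ M, e.2 = f.2 → e = f)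
    (hcov : ∀ d ∈ Dside X, ∃ e ∈ M, e.1 = d) : (Dside X).ncard ≤ (Hside X).ncard := by
  choose m hmM hm1 using hcov
  refine Nat.card_le_card_of_injective
    (fun d => ⟨(m d d.2).2, hX.inr_mem (hML (hmM d d.2)) (by rw [hm1 d d.2]; exact d.2)⟩) ?_
  intro d₁ d₂ h
  have := hM _ (hmM _ d₁.2) _ (hmM _ d₂.2) (congrArg Subtype.val h)
  exact Subtype.ext ((hm1 _ d₁.2).symm.trans ((congrArg Prod.fst this).trans (hm1 _ d₂.2)))

lemma isComponent.ncard_Hside_le_ncard_Dside [Finite D] (hX : isComponent L X)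
    {M : Set (D × H)} (hML : M ⊆ L) (hM : ∀ e ∈ M, ∀ f ∈ M, e.1 = f.1 → e = f)
    (hcov : ∀ h ∈ Hside X, ∃ e ∈ M, e.2 = h) : (Hside X).ncard ≤ (Dside X).ncard := by
  choose m hmM hm2 using hcov
  refine Nat.card_le_card_of_injective
    (fun h => ⟨(m h h.2).1, hX.inl_mem (hML (hmM h h.2)) (by rw [hm2 h h.2]; exact h.2)⟩) ?_
  intro h₁ h₂ h
  have := hM _ (hmM _ h₁.2) _ (hmM _ h₂.2) (congrArg Subtype.val h)
  exact Subtype.ext ((hm2 _ h₁.2).symm.trans ((congrArg Prod.snd this).trans (hm2 _ h₂.2)))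

variable [Fintype D] [Fintype H]

lemma isComponent.ncard_le_ncard_edges_add_one (hX : isComponent L X) :
    X.ncard ≤ {e ∈ L | Sum.inl e.1 ∈ X}.ncard + 1 := by
  obtain ⟨v, -, rfl⟩ := hX
  change (compOf L v).ncard ≤ {e ∈ L | Sum.inl e.1 ∈ compOf L v}.ncard + 1
  rw [compOf_eq_supp]
  set C := (bipartiteGraph L).connectedComponentMk v
  have hconn := C.connected_toSimpleGraph.card_vert_le_card_edgeSet_add_one
  rw [Nat.card_coe_set_eq] at hconn
  refine hconn.trans (Nat.add_le_add_right ?_ 1)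
  rw [← Nat.card_coe_set_eq]
  refine Nat.card_le_card_of_surjective (fun e => ⟨s(⟨.inl e.1.1, e.2.2⟩,
    ⟨.inr e.1.2, C.mem_supp_of_adj_mem_supp e.2.2 e.2.1⟩), e.2.1⟩) ?_
  rintro ⟨z, hz⟩
  induction z using Sym2.ind with
  | _ u w =>
    rcases u with ⟨d | h, hu⟩ <;> rcases w with ⟨d' | h', hw⟩
    · exact hz.elim
    · exact ⟨⟨(d, h'), hz, hu⟩, rfl⟩
    · exact ⟨⟨(d', h), hz, hw⟩, Subtype.ext Sym2.eq_swap⟩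
    · exact hz.elim

lemma ncard_edges_add_ncard_leaves
    (hdeg : ∀ d ∈ Dside X, 1 ≤ (edgesD L d).ncard ∧ (edgesD L d).ncard ≤ 2) :
    {e ∈ L | Sum.inl e.1 ∈ X}.ncard + {d ∈ Dside X | (edgesD L d).ncard = 1}.ncard =
      2 * (Dside X).ncard := by
  have hedges :
      {e ∈ L | Sum.inl e.1 ∈ X}.ncard = ∑ d ∈ (Dside X).toFinset, (edgesD L d).ncard := by
    rw [Set.ncard_eq_toFinset_card', Finset.card_eq_sum_card_fiberwise (f := Prod.fst)
      (t := (Dside X).toFinset) (fun e he => Set.mem_toFinset.mpr (Set.mem_toFinset.mp he).2)]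
    refine Finset.sum_congr rfl fun d hd => ?_
    rw [Set.ncard_eq_toFinset_card']
    congr 1
    ext e
    rw [Set.mem_toFinset] at hd
    rw [Finset.mem_filter, Set.mem_toFinset, Set.mem_toFinset]
    exact ⟨fun ⟨⟨hL, _⟩, h1⟩ => ⟨hL, h1⟩, fun ⟨hL, h1⟩ => ⟨⟨hL, h1 ▸ hd⟩, h1⟩⟩
  have hleaves : {d ∈ Dside X | (edgesD L d).ncard = 1}.ncard =
      ∑ d ∈ (Dside X).toFinset, if (edgesD L d).ncard = 1 then 1 else 0 := by
    rw [← Finset.card_filter, Set.ncard_eq_toFinset_card']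
    congr 1
    ext d
    rw [Finset.mem_filter, Set.mem_toFinset, Set.mem_toFinset]
    rfl
  rw [hedges, hleaves, ← Finset.sum_add_distrib, Set.ncard_eq_toFinset_card' (Dside X),
    Finset.card_eq_sum_ones, Finset.mul_sum]
  refine Finset.sum_congr rfl fun d hd => ?_
  have := hdeg d (Set.mem_toFinset.mp hd)
  split_ifs <;> omega

end Components

namespace SSMC

variable {I : SSMC D H} {R μ σ : Set (D × H)} {X : Set (D ⊕ H)}

lemma memQ.not_memPstar (hX : I.memQ R X) : ¬ I.memPstar R X :=
  fun hP => hX.2.ne hP.1.2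

lemma memRcal.not_memC (hX : I.memRcal R X) : ¬ I.memC R X := by
  obtain ⟨-, h, rfl, -⟩ := hX
  rintro ⟨-, h2⟩
  rw [Set.ncard_singleton] at h2
  omega

lemma memVplus.not_memPstar (hX : I.memVplus R X) : ¬ I.memPstar R X := by
  rcases hX with ⟨hQ, -⟩ | hR
  · exact hQ.not_memPstar
  · exact fun hP => hR.not_memC hP.1.1

lemma memVplus.isComponent (hX : I.memVplus R X) : isComponent (I.Lset R) X := by
  rcases hX with ⟨hQ, -⟩ | hR
  · exact hQ.1.1
  · exact hR.1

section Finite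

variable [Fintype D] [Fintype H]

lemma edgesD_eq_pair (hdeg : ∀ d : D, (edgesD I.E d).ncard ≤ 2) {e f : D × H} (he : e ∈ I.E)
    (hf : f ∈ I.E) (h1 : e.1 = f.1) (hne : e ≠ f) : edgesD I.E f.1 = {e, f} := by
  refine (Set.eq_of_subset_of_ncard_le ?_ ?_).symm
  · rintro g (rfl | rfl)
    exacts [⟨he, h1⟩, ⟨hf, rfl⟩]
  · rw [Set.ncard_pair hne]
    exact hdeg _

lemma preproc.memPstar_of_mem_leafSet (hdeg : ∀ d : D, (edgesD I.E d).ncard ≤ 2)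
    (hpre : I.preproc R μ) (hX : isComponent (I.Lset R) X) (h2 : 2 ≤ X.ncard) {d : D}
    (hd : d ∈ I.leafSet R X) : I.memPstar R X := by
  have hdegL : ∀ d ∈ Dside X,
      1 ≤ (edgesD (I.Lset R) d).ncard ∧ (edgesD (I.Lset R) d).ncard ≤ 2 := fun d hd => by
    obtain ⟨e, he, he1⟩ := hX.exists_mem_fst_eq h2 hd
    refine ⟨(Set.ncard_pos (s := edgesD _ d)).mpr ⟨e, he, he1⟩, ?_⟩
    exact (Set.ncard_le_ncard (t := edgesD I.E d) fun e he => ⟨(Lset_subset he.1).1, he.2⟩).trans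
      (hdeg d)
  have hedges : _ + (I.leafSet R X).ncard = _ := ncard_edges_add_ncard_leaves hdegL
  have hconn := hX.ncard_le_ncard_edges_add_one
  have hsplit : (Dside X).ncard + (Hside X).ncard = X.ncard :=
    Set.ncard_preimage_inl_add_ncard_preimage_inr (Set.toFinite X)
  have hDH := hX.ncard_Dside_le_ncard_Hside (fun _ => hpre.mem_Lset)
    (fun _ he _ hf => hpre.isMatching.eq_of_snd_eq he hf) fun d hd => by
      obtain ⟨e, he, rfl⟩ := hX.exists_mem_fst_eq h2 hd
      exact hpre.exists_mem_fst_eq (Lset_subset he)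
  have hleaf : 1 ≤ (I.leafSet R X).ncard := (Set.ncard_pos (s := I.leafSet R X)).mpr ⟨d, hd⟩
  exact ⟨⟨⟨hX, h2⟩, by omega⟩, by omega⟩

lemma preproc.leaf_of_mem_stable (hdeg : ∀ d : D, (edgesD I.E d).ncard ≤ 2)
    (hpre : I.preproc R μ) (hσ : I.stable σ) {w : D × H} (hw : w ∈ σ) (hwL : w ∉ I.Lset R) :
    ∃ m ∈ I.Lset R, m.1 = w.1 ∧ I.strictD w.1 (some m) (some w) ∧
      (edgesD I.E w.1).ncard = 2 ∧ I.memPstar R (compOf (I.Lset R) (Sum.inl w.1)) ∧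
      I.leafSet R (compOf (I.Lset R) (Sum.inl w.1)) = {w.1} := by
  obtain ⟨m, hmμ, hm1⟩ := hpre.exists_mem_fst_eq (hpre.stable_subset hσ hw)
  have hmL := hpre.mem_Lset hmμ
  have hmw : m ≠ w := fun h => hwL (h ▸ hmL)
  have hpair := edgesD_eq_pair hdeg (Lset_subset hmL).1 (hσ.subset hw) hm1 hmw
  have hLd : edgesD (I.Lset R) w.1 = {m} := by
    ext f
    refine ⟨fun hf => ?_, fun hf => hf ▸ ⟨hmL, hm1⟩⟩
    have hfE : f ∈ edgesD I.E w.1 := ⟨(Lset_subset hf.1).1, hf.2⟩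
    rw [hpair] at hfE
    exact hfE.resolve_right fun hfw => hwL (hfw ▸ hf.1)
  have hleaf : w.1 ∈ I.leafSet R (compOf (I.Lset R) (Sum.inl w.1)) :=
    ⟨mem_compOf_self _, by rw [hLd, Set.ncard_singleton]⟩
  have hP := hpre.memPstar_of_mem_leafSet hdeg (isComponent_compOf _)
    (hm1 ▸ two_le_ncard_compOf hmL) hleaf
  refine ⟨m, hmL, hm1, hpre.strictD_of_mem_stable hσ (Lset_subset_ChD hmL) hw hwL hm1.symm,
    by rw [hpair, Set.ncard_pair hmw], hP, ?_⟩
  obtain ⟨d, hd⟩ := Set.ncard_eq_one.mp hP.2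
  rw [hd] at hleaf ⊢
  rw [Set.mem_singleton_iff.mp hleaf]

lemma preproc.eq_of_compOf_eq (hdeg : ∀ d : D, (edgesD I.E d).ncard ≤ 2)
    (hpre : I.preproc R μ) (hσ : I.stable σ) {w w' : D × H} (hw : w ∈ σ) (hwL : w ∉ I.Lset R)
    (hw' : w' ∈ σ) (hw'L : w' ∉ I.Lset R)
    (h : compOf (I.Lset R) (Sum.inl w.1) = compOf (I.Lset R) (Sum.inl w'.1)) : w = w' := by
  obtain ⟨-, -, -, -, -, -, hleaf⟩ := hpre.leaf_of_mem_stable hdeg hσ hw hwL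
  obtain ⟨-, -, -, -, -, -, hleaf'⟩ := hpre.leaf_of_mem_stable hdeg hσ hw' hw'L
  rw [h, hleaf', Set.singleton_eq_singleton_iff] at hleaf
  exact hσ.isMatching.eq_of_fst_eq hw hw' hleaf.symm

lemma preproc.arc_compOf (hdeg : ∀ d : D, (edgesD I.E d).ncard ≤ 2) (hpre : I.preproc R μ)
    (hσ : I.stable σ) (hX : I.memV R X) {w : D × H} (hw : w ∈ σ) (hwL : w ∉ I.Lset R)
    (hwX : Sum.inr w.2 ∈ X) (hleaf : w.1 ∉ I.leafSet R X)
    (hP : I.memPstar R X → ∃ (dX : D) (hX : H), dX ∈ I.leafSet R X ∧ (dX, hX) ∈ I.Lset R ∧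
      hX = w.2 ∧ I.strictH w.2 (some w) (some (dX, w.2)))
    (hQ : I.memQ R X → ∃ e ∈ I.Lset R, e.2 = w.2 ∧ I.prefH w.2 (some w) (some e))
    (hR : I.memRcal R X → ∀ e ∈ R, e.2 = w.2 →
      (I.simD e.1 (some e) (muD μ e.1) → I.prefH w.2 (some w) (some e)) ∧
      (I.strictD e.1 (some e) (muD μ e.1) → I.strictH w.2 (some w) (some e))) :
    I.arc R μ X (compOf (I.Lset R) (Sum.inl w.1)) := by
  obtain ⟨m, hmL, hm1, hstr, hdeg2, hPY, hleafY⟩ := hpre.leaf_of_mem_stable hdeg hσ hw hwL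
  have hm : (w.1, m.2) = m := Prod.ext hm1.symm rfl
  refine ⟨hX, Or.inl hPY, fun h => hleaf (h ▸ hleafY ▸ Set.mem_singleton w.1), hPY, w.1, m.2, w.2,
    hleafY ▸ Set.mem_singleton w.1, hm ▸ hmL, fun h => hwL (Prod.ext hm1 h.symm ▸ hmL),
    hσ.subset hw, hdeg2, hwX, hm ▸ hstr, hP, hQ, hR⟩

/-- Were every hospital of `X` matched by `σ` inside `L`, `σ` would inject `H_X` into `D_X`. -/
lemma preproc.exists_arc_of_memQ (hdeg : ∀ d : D, (edgesD I.E d).ncard ≤ 2)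
    (hpre : I.preproc R μ) (hσ : I.stable σ) (hXQ : I.memQ R X) (hS : ∀ h ∈ Hside X, h ∉ I.S) :
    ∃ w ∈ σ, w ∉ I.Lset R ∧ Sum.inr w.2 ∈ X ∧ I.arc R μ X (compOf (I.Lset R) (Sum.inl w.1)) := by
  obtain ⟨⟨hX, h2⟩, hlt⟩ := hXQ
  have hmatched : ∀ h ∈ Hside X, ∃ e ∈ I.Lset R, e.2 = h ∧
      ∃ w ∈ σ, w.2 = h ∧ I.prefH h (some w) (some e) := fun h hh => by
    obtain ⟨d | _, -, hadj⟩ := hX.exists_adj h2 hh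
    · obtain ⟨w, hwσ, hw2, hwe⟩ := hpre.exists_prefH_of_mem_Lset hσ hadj (hS h hh)
      exact ⟨(d, h), hadj, rfl, w, hwσ, hw2, hwe⟩
    · exact hadj.elim
  obtain ⟨h, hh, w, hwσ, hw2, hwL⟩ : ∃ h ∈ Hside X, ∃ w ∈ σ, w.2 = h ∧ w ∉ I.Lset R := by
    by_contra! hall
    refine hlt.not_ge (hX.ncard_Hside_le_ncard_Dside Set.inter_subset_right
      (fun e he f hf => hσ.isMatching.eq_of_fst_eq he.1 hf.1) fun h hh => ?_)
    obtain ⟨-, -, -, w, hwσ, hw2, -⟩ := hmatched h hh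
    exact ⟨w, ⟨hwσ, hall h hh w hwσ hw2⟩, hw2⟩
  subst hw2
  refine ⟨w, hwσ, hwL, hh, hpre.arc_compOf hdeg hσ (Or.inr (Or.inl ⟨⟨hX, h2⟩, hlt⟩)) hwσ hwL hh
    (fun hleaf => ?_) (fun hP => absurd hP.1.2 hlt.ne) (fun _ => ?_)
    (fun hR => absurd ⟨hX, h2⟩ hR.not_memC)⟩
  · exact (hpre.memPstar_of_mem_leafSet hdeg hX h2 hleaf).1.2.not_lt hlt
  · obtain ⟨e, heL, he2, w', hw'σ, hw'2, hw'e⟩ := hmatched w.2 hh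
    obtain rfl := hσ.isMatching.eq_of_snd_eq hw'σ hwσ hw'2
    exact ⟨e, heL, he2, hw'e⟩

lemma preproc.exists_arc_of_memRcal (hdeg : ∀ d : D, (edgesD I.E d).ncard ≤ 2)
    (hpre : I.preproc R μ) (hσ : I.stable σ) (hXR : I.memRcal R X) :
    ∃ w ∈ σ, w ∉ I.Lset R ∧ Sum.inr w.2 ∈ X ∧ I.arc R μ X (compOf (I.Lset R) (Sum.inl w.1)) := by
  obtain ⟨hX, h, rfl, hS, e, heR, rfl⟩ := id hXR
  obtain ⟨w, hwσ, hw2, -, -⟩ := hpre.exists_prefH_of_mem hσ heR hS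
  have hwL : w ∉ I.Lset R := fun hwL => Sum.inl_ne_inr (hX.inl_mem hwL (hw2 ▸ rfl))
  refine ⟨w, hwσ, hwL, hw2 ▸ rfl, hpre.arc_compOf hdeg hσ (Or.inr (Or.inr hXR)) hwσ hwL
    (hw2 ▸ rfl) (fun hleaf => Sum.inl_ne_inr hleaf.1) (fun hP => absurd hP.1.1 hXR.not_memC)
    (fun hQ => absurd hQ.1 hXR.not_memC) fun _ f hfR hf2 => ?_⟩
  obtain ⟨w', hw'σ, hw'2, hw'f, hw'str⟩ := hpre.exists_prefH_of_mem hσ hfR (hf2.trans hw2 ▸ hS)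
  obtain rfl := hσ.isMatching.eq_of_snd_eq hw'σ hwσ (hw'2.trans hf2)
  exact ⟨fun _ => hf2 ▸ hw'f, hf2 ▸ hw'str⟩

lemma preproc.exists_arc_of_memVplus (hdeg : ∀ d : D, (edgesD I.E d).ncard ≤ 2)
    (hpre : I.preproc R μ) (hσ : I.stable σ) (hX : I.memVplus R X) :
    ∃ w ∈ σ, w ∉ I.Lset R ∧ Sum.inr w.2 ∈ X ∧ I.arc R μ X (compOf (I.Lset R) (Sum.inl w.1)) := by
  rcases hX with ⟨hQ, hS⟩ | hR
  · exact hpre.exists_arc_of_memQ hdeg hσ hQ hS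
  · exact hpre.exists_arc_of_memRcal hdeg hσ hR

lemma preproc.memVminus_or_exists_arc (hdeg : ∀ d : D, (edgesD I.E d).ncard ≤ 2)
    (hpre : I.preproc R μ) (hσ : I.stable σ) {w : D × H} (hw : w ∈ σ) (hwL : w ∉ I.Lset R) :
    I.memVminus R (compOf (I.Lset R) (Sum.inl w.1)) ∨
      ∃ w' ∈ σ, w' ∉ I.Lset R ∧ Sum.inr w'.2 ∈ compOf (I.Lset R) (Sum.inl w.1) ∧
        I.arc R μ (compOf (I.Lset R) (Sum.inl w.1)) (compOf (I.Lset R) (Sum.inl w'.1)) := by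
  obtain ⟨m, hmL, hm1, hstr, -, hPY, hleafY⟩ := hpre.leaf_of_mem_stable hdeg hσ hw hwL
  have hm : (w.1, m.2) = m := Prod.ext hm1.symm rfl
  by_cases hS : m.2 ∈ I.S
  · exact Or.inl ⟨hPY, w.1, hleafY ▸ Set.mem_singleton w.1, m.2, hm ▸ hmL, hS⟩
  have hmσ : m ∉ σ := fun hmσ => hwL (hσ.isMatching.eq_of_fst_eq hmσ hw hm1 ▸ hmL)
  obtain ⟨w', hw'σ, hw'2, hw'm⟩ := hσ.exists_strictH (Lset_subset hmL).1 hmσ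
    (by rwa [hm1, hσ.isMatching.muD_eq hw]) (absurd · hS)
  have hw'L : w' ∉ I.Lset R := fun hw'L => hw'm.2 (prefH_of_mem_Lset hmL hw'L hw'2)
  have hw'Y : Sum.inr w'.2 ∈ compOf (I.Lset R) (Sum.inl w.1) :=
    hw'2 ▸ (isComponent_compOf _).inr_mem hmL (hm1 ▸ mem_compOf_self _)
  refine Or.inr ⟨w', hw'σ, hw'L, hw'Y, hpre.arc_compOf hdeg hσ (Or.inl hPY) hw'σ hw'L hw'Y
    (fun hleaf => ?_) (fun _ => ⟨w.1, m.2, hleafY ▸ Set.mem_singleton w.1, hm ▸ hmL, hw'2.symm,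
      by rwa [hw'2, hm]⟩)
    (fun hQ => absurd hPY hQ.not_memPstar) (fun hR => absurd hPY.1.1 hR.not_memC)⟩
  rw [hleafY, Set.mem_singleton_iff] at hleaf
  obtain rfl := hσ.isMatching.eq_of_fst_eq hw'σ hw hleaf
  exact hwL (Prod.ext hm1 hw'2.symm ▸ hmL)

end Finite

end SSMC

theorem stable_implies_paths_general {D H : Type} [Fintype D] [Fintype H]
    (I : SSMC D H) (hdeg : ∀ d : D, (edgesD I.E d).ncard ≤ 2)
    (R μ : Set (D × H)) (hpre : I.preproc R μ)
    (hstab : ∃ σ : Set (D × H), I.stable σ) :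
    ∀ X : Set (D ⊕ H), I.memVplus R X →
      ∃ Y : Set (D ⊕ H), I.memVminus R Y ∧
        Relation.ReflTransGen (I.arc R μ) X Y := by
  obtain ⟨σ, hσ⟩ := hstab
  intro X hX
  by_contra! hno
  set L := I.Lset R
  let T := {Y | Relation.ReflTransGen (I.arc R μ) X Y ∧
    ∃ w ∈ σ, w ∉ L ∧ Y = compOf L (Sum.inl w.1)}
  let feeds (Y A : Set (D ⊕ H)) : Prop :=
    ∃ w ∈ σ, w ∉ L ∧ Y = compOf L (Sum.inl w.1) ∧ Sum.inr w.2 ∈ A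
  have hcomp : ∀ A ∈ insert X T, isComponent L A := by
    rintro A (rfl | ⟨-, w, -, -, rfl⟩)
    exacts [hX.isComponent, isComponent_compOf _]
  obtain ⟨-, w, hw, hwL, rfl⟩ : X ∈ T := by
    refine Set.mem_of_forall_mem_insert_exists_rel (r := feeds) ?_ ?_
    · rintro Y - A hA B hB ⟨w, hw, hwL, rfl, hwA⟩ ⟨w', hw', hw'L, hww', hw'B⟩
      obtain rfl := hpre.eq_of_compOf_eq hdeg hσ hw hwL hw' hw'L hww'
      exact (hcomp A hA).eq_of_mem (hcomp B hB) hwA hw'B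
    · rintro A (rfl | ⟨hXA, w, hw, hwL, rfl⟩)
      · obtain ⟨w, hw, hwL, hwA, harc⟩ := hpre.exists_arc_of_memVplus hdeg hσ hX
        exact ⟨_, ⟨.single harc, w, hw, hwL, rfl⟩, w, hw, hwL, rfl, hwA⟩
      · obtain hV | ⟨w', hw', hw'L, hw'A, harc⟩ := hpre.memVminus_or_exists_arc hdeg hσ hw hwL
        · exact absurd hXA (hno _ hV)
        · exact ⟨_, ⟨hXA.tail harc, w', hw', hw'L, rfl⟩, w', hw', hw'L, rfl, hw'A⟩
  obtain ⟨-, -, -, -, -, hP, -⟩ := hpre.leaf_of_mem_stable hdeg hσ hw hwL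
  exact hX.not_memPstar hP

/-- in the bounded-degree setting with a critical hospital, if
there exists a stable matching in `G`, then every `X ∈ 𝓥⁺` has a directed path
in `𝐃` to some `Y ∈ 𝓥⁻`. -/
theorem stable_implies_paths {D H : Type} [Fintype D] [Fintype H]
    (I : SSMC D H) (hdeg : ∀ d : D, (edgesD I.E d).ncard ≤ 2)
    (R μ : Set (D × H)) (hpre : I.preproc R μ)
    (hcrit : ∃ h : H, I.critical R μ h)
    (hstab : ∃ σ : Set (D × H), I.stable σ) :
    ∀ X : Set (D ⊕ H), I.memVplus R X →
      ∃ Y : Set (D ⊕ H), I.memVminus R Y ∧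
        Relation.ReflTransGen (I.arc R μ) X Y :=
  stable_implies_paths_general I hdeg R μ hpre hstab
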